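/- arXiv:0911.1398 — 3 statements merged into one kernel-verified Lean document; each statement's English description precedes it below -/
import Mathlib

section
/- Let m ≥ 2 and 0 ≤ ℓ ≤ m−1, and let D = diag(a_1,…,a_{m+ℓ}) be an m-reducible diagram with red_m(D) = diag(b_1,…,b_{m+ℓ}). Then the sum of the first m layers strictly decreases under m-reduction: b_1+⋯+b_m ≤ (a_1+⋯+a_m) − (m−ℓ) < a_1+⋯+a_m. (This strict decrease of the head weight is what guarantees termination of the algorithm enumerating all admissible tails via symbolic reductions.) -/
/-!  Diagrams and `m`-reductions (Dumnicki, "Special homogeneous linear systems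
on Hirzebruch surfaces --- algorithmic issues").

A diagram `diag(a_1,…,a_k)` is encoded as the list `[a_1,…,a_k] : List ℕ` of its layers;
two diagrams are identified when they differ only by trailing zero layers. -/

/-- The number `r` subtracted from the current layer `a` in one step of the `m`-reduction,
given the set `U` of numbers already used: `r = a` if `a < m`, and
`r = max({1,…,m} \ U)` otherwise. -/
def redStep (m a : ℕ) (U : Finset ℕ) : ℕ :=
  if a < m then a else (Finset.Icc 1 m \ U).sup id

/-- Auxiliary recursion: process the first `i` entries of a list (the layers are fed
in reversed order, so these are the last `i` layers of the diagram), maintaining the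
set `U`; returns the final set `U` together with the new list of layers. -/
def redAux (m : ℕ) : ℕ → Finset ℕ → List ℕ → Finset ℕ × List ℕ
  | 0, U, l => (U, l)
  | _ + 1, U, [] => (U, [])
  | i + 1, U, a :: rest =>
    let r := redStep m a U
    let p := redAux m i (insert r U) rest
    (p.1, (a - r) :: p.2)

/-- The `m`-reduction of the diagram `diag(a_1,…,a_k)` given by the list of its layers:
process the indices `j = k,…,k-m+1` starting from `U = ∅`; the reduction succeeds
(returning `some (diag(b_1,…,b_k))`) iff `k ≥ m` and the final set `U` is `{1,…,m}`;
otherwise the diagram is not `m`-reducible and `none` is returned. -/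
def reduceList (m : ℕ) (D : List ℕ) : Option (List ℕ) :=
  if m ≤ D.length ∧ (redAux m m ∅ D.reverse).1 = Finset.Icc 1 m then
    some (redAux m m ∅ D.reverse).2.reverse
  else none

/-- The diagram given by the list of layers `D` is `m`-reducible. -/
def Reducible (m : ℕ) (D : List ℕ) : Prop := ∃ G, reduceList m D = some G

/-- Remove trailing zero layers: the canonical representative of a diagram. -/
def trim (D : List ℕ) : List ℕ := (D.reverse.dropWhile (· == 0)).reverse

/-- The `m`-reduction as an operation on diagrams identified up to trailing zero layers. -/
def redT (m : ℕ) (D : List ℕ) : Option (List ℕ) :=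
  (reduceList m (trim D)).map trim

/-- The `n`-fold `m`-reduction of a diagram; `none` as soon as some intermediate
diagram is not `m`-reducible. -/
def redIterT (m : ℕ) : ℕ → List ℕ → Option (List ℕ)
  | 0, D => some (trim D)
  | n + 1, D => (redIterT m n D).bind (redT m)

/-- Fuelled iteration of the `m`-reduction. -/
def nfAux (m : ℕ) : ℕ → List ℕ → List ℕ
  | 0, D => D
  | f + 1, D =>
    match redT m D with
    | none => D
    | some G => nfAux m f G

/-- The iterated-`m`-reduction normal form of a diagram: apply the `m`-reduction
repeatedly until the diagram is no longer `m`-reducible.  (The fuel `D.sum` always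
suffices, since each successful `m`-reduction strictly decreases the weight.) -/
def normalForm (m : ℕ) (D : List ℕ) : List ℕ := nfAux m D.sum (trim D)

/-- The sequence of admissible `h`-tails for multiplicity `m`:
`D_0 = ∅` and `D_{n+1}` is the iterated-`m`-reduction normal form of `h :: D_n`. -/
def seqD (m h : ℕ) : ℕ → List ℕ
  | 0 => []
  | n + 1 => normalForm m (h :: seqD m h n)


/-! The `m`-reduction changes only the last `m` layers, and subtracts from each of them an
amount `r_j` with `1 ≤ r_j ≤ a_j`: positive because the `r_j` are collected in `U`, which ends
as `{1,…,m}`. Among the first `m` layers, `m - ℓ` are also among the last `m`, so the head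
weight drops by at least `m - ℓ ≥ 1`. -/

lemma redStep_le (m a : ℕ) (U : Finset ℕ) : redStep m a U ≤ a := by
  unfold redStep
  split_ifs with ha
  · exact le_rfl
  · calc (Finset.Icc 1 m \ U).sup id ≤ m :=
          Finset.sup_le fun x hx => (Finset.mem_Icc.mp (Finset.mem_sdiff.mp hx).1).2
      _ ≤ a := not_lt.mp ha

lemma redAux_fst_subset (m : ℕ) : ∀ i U (l : List ℕ), U ⊆ (redAux m i U l).1
  | 0, _, _ => subset_rfl
  | _ + 1, _, [] => subset_rfl
  | i + 1, U, _ :: rest =>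
    (Finset.subset_insert _ U).trans (redAux_fst_subset m i _ rest)

lemma length_redAux_snd (m : ℕ) : ∀ i U (l : List ℕ), (redAux m i U l).2.length = l.length
  | 0, _, _ => rfl
  | _ + 1, _, [] => rfl
  | i + 1, _, _ :: rest => congrArg (· + 1) (length_redAux_snd m i _ rest)

lemma sum_drop_redAux_snd_add_le (m : ℕ) : ∀ i (l : List ℕ) U d, i ≤ l.length →
    0 ∉ (redAux m i U l).1 → ((redAux m i U l).2.drop d).sum + (i - d) ≤ (l.drop d).sum
  | 0, _, _, _, _, _ => by simp [redAux]
  | _ + 1, [], _, _, hi, _ => by simp at hi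
  | i + 1, a :: rest, U, d, hi, h0 => by
    set r := redStep m a U
    have h0' : 0 ∉ (redAux m i (insert r U) rest).1 := h0
    have hr_pos : 0 < r := Nat.pos_of_ne_zero fun hr =>
      h0' (redAux_fst_subset m i _ rest (hr ▸ Finset.mem_insert_self r U))
    have hr_le : r ≤ a := redStep_le m a U
    have hi' : i ≤ rest.length := Nat.le_of_succ_le_succ hi
    cases d with
    | zero =>
      have ih := sum_drop_redAux_snd_add_le m i rest (insert r U) 0 hi' h0'
      simp only [List.drop_zero] at ih
      change (a - r) + (redAux m i (insert r U) rest).2.sum + (i + 1) ≤ a + rest.sum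
      omega
    | succ d =>
      have ih := sum_drop_redAux_snd_add_le m i rest (insert r U) d hi' h0'
      change ((redAux m i (insert r U) rest).2.drop d).sum + (i + 1 - (d + 1))
        ≤ (rest.drop d).sum
      omega

lemma eq_redAux_of_reduceList_eq_some {m : ℕ} {a b : List ℕ} (h : reduceList m a = some b) :
    (redAux m m ∅ a.reverse).1 = Finset.Icc 1 m ∧ b = (redAux m m ∅ a.reverse).2.reverse := by
  unfold reduceList at h
  split_ifs at h with hcond
  exact ⟨hcond.2, (Option.some.inj h).symm⟩

lemma sum_take_eq_sum_drop_reverse {M : Type*} [AddCommMonoid M] {l : List M} {k ℓ : ℕ}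
    (hl : l.length = k + ℓ) : (l.take k).sum = (l.reverse.drop ℓ).sum := by
  rw [List.drop_reverse, List.sum_reverse, hl, Nat.add_sub_cancel]

/-- let `m ≥ 2`, `0 ≤ ℓ ≤ m-1`, and let `D = diag(a_1,…,a_{m+ℓ})` be an
`m`-reducible diagram with `red_m(D) = diag(b_1,…,b_{m+ℓ})`.  Then the sum of the
first `m` layers strictly decreases under `m`-reduction:
`b_1+⋯+b_m ≤ (a_1+⋯+a_m) - (m-ℓ) < a_1+⋯+a_m`. -/
theorem head_weight_strictly_decreases (m ℓ : ℕ) (hm : 2 ≤ m) (hℓ : ℓ ≤ m - 1)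
    (a b : List ℕ) (hlen : a.length = m + ℓ)
    (h : reduceList m a = some b) :
    (b.take m).sum + (m - ℓ) ≤ (a.take m).sum ∧ (b.take m).sum < (a.take m).sum := by
  obtain ⟨hU, rfl⟩ := eq_redAux_of_reduceList_eq_some h
  have h0 : 0 ∉ (redAux m m ∅ a.reverse).1 := by simp [hU]
  have hblen : (redAux m m ∅ a.reverse).2.reverse.length = m + ℓ := by
    simp [length_redAux_snd, hlen]
  have key := sum_drop_redAux_snd_add_le m m a.reverse ∅ ℓ (by simp [hlen]) h0
  rw [sum_take_eq_sum_drop_reverse hblen, sum_take_eq_sum_drop_reverse hlen, List.reverse_reverse]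
  exact ⟨key, by omega⟩
end

section
/- Define a sequence of diagrams by D_0 = the empty diagram and D_{n+1} = the iterated-3-reduction normal form of the diagram obtained from D_n = diag(a_1,…,a_k) by prepending a layer 5, i.e. of diag(5,a_1,…,a_k). Then the set of all values of this sequence is exactly the nine diagrams {∅, diag(5), diag(5,5), diag(3), diag(5,3), diag(4,3), diag(4,2), diag(4,1), diag(3,1)}; in particular every D_n has at most 2 nonzero layers, and the sequence is eventually periodic with D_{n+6} = D_n for all n ≥ 3. -/
/-! Once the orbit of `[]` under `D ↦ normalForm 3 (5 :: D)` is seen to return to `D_3` after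
six steps, the whole sequence is determined by its first nine terms, which are computed. -/

open Function

theorem seqD_eq_iterate (m h n : ℕ) :
    seqD m h n = (fun D => normalForm m (h :: D))^[n] [] := by
  induction n with
  | zero => rfl
  | succ n ih => rw [iterate_succ_apply', ← ih]; rfl

theorem iterate_add_eq_of_isPeriodicPt {α : Type*} {f : α → α} {x : α} {a p : ℕ}
    (hp : IsPeriodicPt f p (f^[a] x)) {n : ℕ} (hn : a ≤ n) : f^[n + p] x = f^[n] x := by
  obtain ⟨k, rfl⟩ := Nat.exists_eq_add_of_le hn
  calc f^[a + k + p] x = f^[k] (f^[p] (f^[a] x)) := by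
        rw [← iterate_add_apply, ← iterate_add_apply, show k + p + a = a + k + p by omega]
    _ = f^[a + k] x := by rw [hp.eq, ← iterate_add_apply, add_comm]

theorem range_eq_image_range_of_eventuallyPeriodic {α : Type*} {u : ℕ → α} {a p : ℕ}
    (hp : 0 < p) (hu : ∀ n, a ≤ n → u (n + p) = u n) :
    Set.range u = u '' ↑(Finset.range (a + p)) := by
  refine (Set.image_subset_range _ _).antisymm' ?_
  rintro _ ⟨n, rfl⟩
  induction n using Nat.strong_induction_on with
  | _ n ih =>
    by_cases hn : n < a + p
    · exact ⟨n, by simpa using hn, rfl⟩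
    · obtain ⟨k, rfl⟩ := Nat.exists_eq_add_of_le (not_lt.mp hn)
      rw [show a + p + k = a + k + p by omega, hu _ (by omega)]
      exact ih _ (by omega)

theorem seqD_3_5_isPeriodicPt :
    IsPeriodicPt (fun D => normalForm 3 (5 :: D)) 6 (seqD 3 5 3) := by
  unfold IsPeriodicPt IsFixedPt
  rw [seqD_eq_iterate, ← iterate_add_apply, ← seqD_eq_iterate]
  decide

theorem seqD_3_5_add_six {n : ℕ} (hn : 3 ≤ n) : seqD 3 5 (n + 6) = seqD 3 5 n := by
  rw [seqD_eq_iterate, seqD_eq_iterate]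
  exact iterate_add_eq_of_isPeriodicPt (seqD_eq_iterate 3 5 3 ▸ seqD_3_5_isPeriodicPt) hn

theorem image_seqD_3_5_range_nine :
    (Finset.range 9).image (seqD 3 5) =
      {[], [5], [5, 5], [3], [5, 3], [4, 3], [4, 2], [4, 1], [3, 1]} := by
  decide

/-- let `D_0 = ∅` and `D_{n+1}` be the iterated-`3`-reduction normal form of
the diagram obtained from `D_n` by prepending a layer `5` (the construction of all
admissible `5`-`∅`-tails for multiplicity `3`).  Then the set of all values of this
sequence is exactly the nine diagrams
`{∅, diag(5), diag(5,5), diag(3), diag(5,3), diag(4,3), diag(4,2), diag(4,1), diag(3,1)}`;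
in particular every `D_n` has at most `2` nonzero layers, and the sequence is eventually
periodic with `D_{n+6} = D_n` for all `n ≥ 3`. -/
theorem h_tails_3_5 :
    Set.range (seqD 3 5) =
      ({[], [5], [5, 5], [3], [5, 3], [4, 3], [4, 2], [4, 1], [3, 1]} : Set (List ℕ)) ∧
    (∀ n : ℕ, (seqD 3 5 n).countP (· != 0) ≤ 2) ∧
    (∀ n : ℕ, 3 ≤ n → seqD 3 5 (n + 6) = seqD 3 5 n) := by
  have hrange : Set.range (seqD 3 5) =
      ({[], [5], [5, 5], [3], [5, 3], [4, 3], [4, 2], [4, 1], [3, 1]} : Set (List ℕ)) := by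
    rw [range_eq_image_range_of_eventuallyPeriodic (a := 3) (by norm_num)
      fun _ => seqD_3_5_add_six, ← Finset.coe_image, image_seqD_3_5_range_nine]
    simp only [Finset.coe_insert, Finset.coe_singleton]
  refine ⟨hrange, fun n => ?_, fun n => seqD_3_5_add_six⟩
  have hn : seqD 3 5 n ∈ Set.range (seqD 3 5) := Set.mem_range_self n
  rw [hrange] at hn
  rcases hn with h | h | h | h | h | h | h | h | h <;> rw [h] <;> decide
end

section
/- Define a sequence of diagrams by D_0 = the empty diagram and D_{n+1} = the iterated-5-reduction normal form of the diagram obtained from D_n = diag(a_1,…,a_k) by prepending a layer 9, i.e. of diag(9,a_1,…,a_k). Then the set of all values of this sequence is exactly the fifteen diagrams {∅, diag(9), diag(9,9), diag(9,9,9), diag(9,9,9,9), diag(7,5,3), diag(9,7,5,3), diag(8,7,3), diag(9,8,7,3), diag(8,7,4,2), diag(8,5,2), diag(9,8,5,2), diag(8,6,4), diag(9,8,6,4), diag(8,7,5,1)}; in particular every D_n has at most 4 nonzero layers, and the sequence is eventually periodic with D_{n+10} = D_n for all n ≥ 5. -/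
/-! Since `D_{n+1}` depends only on `D_n`, a single repetition `D_15 = D_5` makes the sequence
periodic from index `5` on with period `10`.  Hence its values are `D_0, …, D_14`, and every
claim reduces to a finite computation on these fifteen diagrams. -/

section EventuallyPeriodic

variable {α : Type*} {s : ℕ → α} {N p : ℕ}

theorem add_period_eq_of_recurrence {F : α → α} (hF : ∀ n, s (n + 1) = F (s n))
    (hN : s (N + p) = s N) : ∀ n, N ≤ n → s (n + p) = s n := by
  intro n hn
  induction n, hn using Nat.le_induction with
  | base => exact hN
  | succ n _ ih => rw [Nat.add_right_comm, hF, hF, ih]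

theorem exists_lt_eq_of_periodic_from (hs : ∀ n, N ≤ n → s (n + p) = s n) (hp : 0 < p)
    (n : ℕ) : ∃ k < N + p, s k = s n := by
  induction n using Nat.strong_induction_on with
  | _ n ih =>
    by_cases hn : n < N + p
    · exact ⟨n, hn, rfl⟩
    · obtain ⟨k, hk, hks⟩ := ih (n - p) (by omega)
      refine ⟨k, hk, ?_⟩
      rw [hks, ← hs (n - p) (by omega), Nat.sub_add_cancel (by omega)]

theorem range_eq_image_Iio_of_periodic_from (hs : ∀ n, N ≤ n → s (n + p) = s n)
    (hp : 0 < p) : Set.range s = s '' Set.Iio (N + p) := by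
  refine (Set.image_subset_range s _).antisymm' ?_
  rintro _ ⟨n, rfl⟩
  exact exists_lt_eq_of_periodic_from hs hp n

end EventuallyPeriodic

/-- let `D_0 = ∅` and `D_{n+1}` be the iterated-`5`-reduction normal form of
the diagram obtained from `D_n` by prepending a layer `9` (the construction of all
admissible `9`-`∅`-tails for multiplicity `5`).  Then the set of all values of this
sequence is exactly the fifteen diagrams
`{∅, diag(9), diag(9,9), diag(9,9,9), diag(9,9,9,9), diag(7,5,3), diag(9,7,5,3),
diag(8,7,3), diag(9,8,7,3), diag(8,7,4,2), diag(8,5,2), diag(9,8,5,2), diag(8,6,4),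
diag(9,8,6,4), diag(8,7,5,1)}`; in particular every `D_n` has at most `4` nonzero layers,
and the sequence is eventually periodic with `D_{n+10} = D_n` for all `n ≥ 5`. -/
theorem h_tails_5_9 :
    Set.range (seqD 5 9) =
      ({[], [9], [9, 9], [9, 9, 9], [9, 9, 9, 9], [7, 5, 3], [9, 7, 5, 3],
        [8, 7, 3], [9, 8, 7, 3], [8, 7, 4, 2], [8, 5, 2], [9, 8, 5, 2],
        [8, 6, 4], [9, 8, 6, 4], [8, 7, 5, 1]} : Set (List ℕ)) ∧
    (∀ n : ℕ, (seqD 5 9 n).countP (· != 0) ≤ 4) ∧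
    (∀ n : ℕ, 5 ≤ n → seqD 5 9 (n + 10) = seqD 5 9 n) := by
  have hperiod : ∀ n, 5 ≤ n → seqD 5 9 (n + 10) = seqD 5 9 n :=
    add_period_eq_of_recurrence (F := fun D => normalForm 5 (9 :: D)) (fun _ => rfl) (by decide)
  refine ⟨?_, fun n => ?_, hperiod⟩
  · rw [range_eq_image_Iio_of_periodic_from hperiod (by norm_num)]
    refine Set.Subset.antisymm (Set.image_subset_iff.2 ?_) ?_
    · simp only [Set.subset_def, Set.mem_Iio, Set.mem_preimage, Set.mem_insert_iff,
        Set.mem_singleton_iff]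
      decide
    · simp only [Set.insert_subset_iff, Set.singleton_subset_iff, Set.mem_image, Set.mem_Iio]
      decide
  · obtain ⟨k, hk, hkn⟩ := exists_lt_eq_of_periodic_from hperiod (by norm_num) n
    rw [← hkn]
    clear hkn
    revert k
    decide
end
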